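/- arXiv:2506.04884 — 2 statements merged into one kernel-verified Lean document; each statement's English description precedes it below -/
import Mathlib

section
/- In the extremal setup (r ≥ 1, n ≥ 8(r²+r+4), G* extremal, A = N(u*), B = V(G*) \ ({u*} ∪ A)): if the set A spans no edges of G* (e(A) = 0), then Σ_{w∈B} d̄_A(w)·x_{u*} + Σ_{w∈B} Γ_w < |A|·x_{u*}, where d̄_A(w) = |A| − d_A(w) and Γ_w = d_A(w)·(x_{u*} − x_w) is the residual index of w. -/
open Finset Matrix

noncomputable section

/-- The book graph `B_{r+1}`: `r+1` triangles sharing a common edge, i.e. the join of an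
edge (vertices `0, 1`) with an independent set of `r+1` vertices. -/
def bookGraph (r : ℕ) : SimpleGraph (Fin (r + 3)) :=
  SimpleGraph.fromRel (fun u _ => u.val < 2)

/-- `Free H G` means `G` contains no subgraph isomorphic to `H`, i.e. there is no injective
graph homomorphism from `H` to `G`. -/
def Free {W V : Type*} (H : SimpleGraph W) (G : SimpleGraph V) : Prop :=
  ¬ ∃ f : H →g G, Function.Injective f

/-- The adjacency matrix of `G` over `ℝ` (with classical decidability of adjacency). -/
def adjMat {V : Type*} (G : SimpleGraph V) : Matrix V V ℝ :=
  letI : DecidableRel G.Adj := Classical.decRel _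
  G.adjMatrix ℝ

/-- The spectral radius of a finite simple graph: the largest real eigenvalue of its
adjacency matrix. -/
def specRad {V : Type*} [Fintype V] (G : SimpleGraph V) : ℝ :=
  sSup {t : ℝ | ∃ v : V → ℝ, v ≠ 0 ∧ adjMat G *ᵥ v = t • v}

/-- `Kstrr s t r` is the graph `K_{s,t}^{r,r}`: the complete bipartite graph with parts
`Fin s` and `Fin t`, together with one extra vertex (`none`) joined to exactly the first
`r` vertices of each part. -/
def Kstrr (s t r : ℕ) : SimpleGraph (Option (Fin s ⊕ Fin t)) :=
  SimpleGraph.fromRel (fun u v =>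
    (∃ a b, u = some (Sum.inl a) ∧ v = some (Sum.inr b)) ∨
    (∃ a : Fin s, u = none ∧ v = some (Sum.inl a) ∧ a.val < r) ∨
    (∃ b : Fin t, u = none ∧ v = some (Sum.inr b) ∧ b.val < r))

/-- `degIn G S v` is the number of neighbours of `v` in the set `S`. -/
def degIn {V : Type*} (G : SimpleGraph V) (S : Finset V) (v : V) : ℕ :=
  letI : DecidableRel G.Adj := Classical.decRel _
  (S.filter fun w => G.Adj v w).card

/-- `edgesIn G S` is the number of edges of `G` with both endpoints in `S`. -/
def edgesIn {V : Type*} [Fintype V] (G : SimpleGraph V) (S : Finset V) : ℕ :=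
  letI := Classical.decEq V
  letI : DecidableRel G.Adj := Classical.decRel _
  letI : DecidablePred fun e : Sym2 V => ∀ v ∈ e, v ∈ S := Classical.decPred _
  (G.edgeFinset.filter fun e => ∀ v ∈ e, v ∈ S).card

/-- `edgeCount G` is the number of edges of `G`. -/
def edgeCount {V : Type*} [Fintype V] (G : SimpleGraph V) : ℕ :=
  letI := Classical.decEq V
  letI : DecidableRel G.Adj := Classical.decRel _
  G.edgeFinset.card

/-- `edgesBetween G S T` is the number of pairs `(s, t) ∈ S × T` with `s` adjacent to `t`;
for disjoint `S` and `T` this is the number of edges between `S` and `T`. -/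
def edgesBetween {V : Type*} (G : SimpleGraph V) (S T : Finset V) : ℕ :=
  letI : DecidableRel G.Adj := Classical.decRel _
  ((S ×ˢ T).filter fun p => G.Adj p.1 p.2).card

/-- `maxDeg G` is the maximum degree of `G`. -/
def maxDeg {V : Type*} [Fintype V] (G : SimpleGraph V) : ℕ :=
  letI : DecidableRel G.Adj := Classical.decRel _
  G.maxDegree

/-- `matchingNumberOn G S` is the matching number of the subgraph of `G` induced by `S`:
the largest cardinality of a set of pairwise disjoint edges of `G` lying inside `S`. -/
def matchingNumberOn {V : Type*} (G : SimpleGraph V) (S : Finset V) : ℕ :=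
  sSup {k | ∃ M : Finset (Sym2 V), ↑M ⊆ G.edgeSet ∧ (∀ e ∈ M, ∀ v ∈ e, v ∈ S) ∧
    M.card = k ∧ (M : Set (Sym2 V)).Pairwise fun e f => ∀ v, v ∈ e → v ∉ f}

/-- `matchingNumber G` is the matching number of `G`. -/
def matchingNumber {V : Type*} [Fintype V] (G : SimpleGraph V) : ℕ :=
  matchingNumberOn G Finset.univ

end


-- ===== auxiliary lemmas =====

lemma adjMat_apply {V : Type*} (G : SimpleGraph V) [DecidableRel G.Adj] (i k : V) :
    adjMat G i k = if G.Adj i k then 1 else 0 := by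
  unfold adjMat
  rw [SimpleGraph.adjMatrix_apply]
  by_cases h : G.Adj i k <;> simp [h]

lemma adjMat_isHermitian {V : Type*} [Fintype V] (G : SimpleGraph V) :
    (adjMat G).IsHermitian := by
  classical
  rw [Matrix.IsHermitian, Matrix.conjTranspose_eq_transpose_of_trivial]
  unfold adjMat
  exact SimpleGraph.isSymm_adjMatrix G

lemma adjMat_abs_le_one {V : Type*} (G : SimpleGraph V) (i k : V) :
    |adjMat G i k| ≤ 1 := by
  classical
  rw [adjMat_apply]
  by_cases h : G.Adj i k <;> simp [h]

lemma rayleigh_max {N : ℕ} (hN : 0 < N) (M : Matrix (Fin N) (Fin N) ℝ) (hM : M.IsHermitian) :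
    ∃ (μ : ℝ) (w : Fin N → ℝ), w ≠ 0 ∧ M *ᵥ w = μ • w ∧
      ∀ v : Fin N → ℝ, v ⬝ᵥ (M *ᵥ v) ≤ μ * (v ⬝ᵥ v) := by
  haveI : Nonempty (Fin N) := Fin.pos_iff_nonempty.mp hN
  obtain ⟨i₀, -, hmax⟩ := Finset.exists_max_image Finset.univ hM.eigenvalues
    ⟨Classical.arbitrary _, mem_univ _⟩
  refine ⟨hM.eigenvalues i₀, ⇑(hM.eigenvectorBasis i₀), ?_, hM.mulVec_eigenvectorBasis i₀, ?_⟩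
  · intro h
    have h1 : ‖hM.eigenvectorBasis i₀‖ = 1 := hM.eigenvectorBasis.orthonormal.1 i₀
    have h0 : hM.eigenvectorBasis i₀ = 0 := by
      ext j; exact congrFun h j
    rw [h0, norm_zero] at h1; norm_num at h1
  · intro v
    set U : Matrix (Fin N) (Fin N) ℝ := ↑(hM.eigenvectorUnitary) with hU
    have hUU : U * star U = 1 := (Matrix.mem_unitaryGroup_iff).mp (hM.eigenvectorUnitary).2
    set y : Fin N → ℝ := star U *ᵥ v with hy
    have hyv : y = v ᵥ* U := by
      rw [hy, Matrix.star_eq_conjTranspose, Matrix.conjTranspose_eq_transpose_of_trivial,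
        mulVec_transpose]
    have h2 : v ⬝ᵥ v = y ⬝ᵥ y := by
      calc v ⬝ᵥ v = v ⬝ᵥ ((U * star U) *ᵥ v) := by rw [hUU, one_mulVec]
        _ = v ⬝ᵥ (U *ᵥ (star U *ᵥ v)) := by rw [mulVec_mulVec]
        _ = (v ᵥ* U) ⬝ᵥ (star U *ᵥ v) := by rw [dotProduct_mulVec]
        _ = y ⬝ᵥ y := by rw [← hyv, ← hy]
    have h1 : v ⬝ᵥ (M *ᵥ v) = ∑ i, hM.eigenvalues i * (y i) ^ 2 := by
      conv_lhs => rw [hM.spectral_theorem, Unitary.conjStarAlgAut_apply]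
      rw [← mulVec_mulVec, ← mulVec_mulVec, dotProduct_mulVec, ← hyv, ← hy]
      simp only [dotProduct, mulVec_diagonal, Function.comp_apply, RCLike.ofReal_real_eq_id,
        id_eq]
      apply Finset.sum_congr rfl; intro i _; ring
    rw [h1, h2, dotProduct, Finset.mul_sum]
    apply Finset.sum_le_sum
    intro i _
    have : (y i) * (y i) = (y i) ^ 2 := by ring
    rw [this]
    exact mul_le_mul_of_nonneg_right (hmax i (mem_univ i)) (sq_nonneg _)

lemma bddAbove_eigenset {N : ℕ} (G : SimpleGraph (Fin N)) :
    BddAbove {t : ℝ | ∃ v : Fin N → ℝ, v ≠ 0 ∧ adjMat G *ᵥ v = t • v} := by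
  classical
  refine ⟨N, ?_⟩
  rintro t ⟨v, hv0, hv⟩
  obtain ⟨j, hj⟩ := Function.ne_iff.mp hv0
  haveI : Nonempty (Fin N) := ⟨j⟩
  obtain ⟨i, -, hmax⟩ := Finset.exists_max_image Finset.univ (fun i => |v i|)
    ⟨j, mem_univ j⟩
  have hvi : 0 < |v i| := lt_of_lt_of_le (abs_pos.mpr hj) (hmax j (mem_univ j))
  have h1 : t * v i = ∑ k, adjMat G i k * v k := by
    have := congrFun hv i
    simp only [Matrix.mulVec, dotProduct, Pi.smul_apply, smul_eq_mul] at this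
    rw [← this]
  have h2 : |t| * |v i| ≤ N * |v i| := by
    rw [← abs_mul, h1]
    calc |∑ k, adjMat G i k * v k| ≤ ∑ k, |adjMat G i k * v k| := Finset.abs_sum_le_sum_abs _ _
      _ ≤ ∑ _k : Fin N, |v i| := by
          apply Finset.sum_le_sum
          intro k _
          rw [abs_mul]
          calc |adjMat G i k| * |v k| ≤ 1 * |v i| := by
                apply mul_le_mul (adjMat_abs_le_one G i k) (hmax k (mem_univ k))
                  (abs_nonneg _) zero_le_one
            _ = |v i| := one_mul _
      _ = N * |v i| := by simp [Finset.sum_const, nsmul_eq_mul]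
  have := le_of_mul_le_mul_right (by linarith [h2] : |t| * |v i| ≤ (N:ℝ) * |v i|) hvi
  exact le_trans (le_abs_self t) this

lemma specRad_ge {N : ℕ} (G : SimpleGraph (Fin N)) (μ : ℝ) (w : Fin N → ℝ) (hw : w ≠ 0)
    (h : adjMat G *ᵥ w = μ • w) : μ ≤ specRad G :=
  le_csSup (bddAbove_eigenset G) ⟨w, hw, h⟩

def KG (n s m r : ℕ) : SimpleGraph (Fin n) :=
  SimpleGraph.fromRel (fun u v =>
    (u.val < s ∧ s ≤ v.val ∧ v.val < m) ∨ (u.val = m ∧ v.val < r) ∨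
    (u.val = m ∧ s ≤ v.val ∧ v.val < s + r))

lemma KG_adj {n s m r : ℕ} (h1 : 1 ≤ r) (h2 : r < s) (h3 : s + r ≤ m) (h4 : m < n)
    (a b : Fin n) :
    (KG n s m r).Adj a b ↔
      (a.val < s ∧ s ≤ b.val ∧ b.val < m) ∨ (b.val < s ∧ s ≤ a.val ∧ a.val < m) ∨
      (a.val = m ∧ (b.val < r ∨ (s ≤ b.val ∧ b.val < s + r))) ∨
      (b.val = m ∧ (a.val < r ∨ (s ≤ a.val ∧ a.val < s + r))) := by
  rw [KG, SimpleGraph.fromRel_adj, Ne, Fin.ext_iff]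
  omega

lemma KG_nonbip {n s m r : ℕ} (h1 : 1 ≤ r) (h2 : r < s) (h3 : s + r ≤ m) (h4 : m < n) :
    ¬ (KG n s m r).Colorable 2 := by
  intro hc
  obtain ⟨C⟩ := hc
  set v0 : Fin n := ⟨0, by omega⟩ with hv0
  set vs : Fin n := ⟨s, by omega⟩ with hvs
  set vm : Fin n := ⟨m, h4⟩ with hvm
  have a1 : (KG n s m r).Adj v0 vs := by rw [KG_adj h1 h2 h3 h4]; simp [hv0, hvs]; omega
  have a2 : (KG n s m r).Adj v0 vm := by rw [KG_adj h1 h2 h3 h4]; simp [hv0, hvm]; omega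
  have a3 : (KG n s m r).Adj vs vm := by rw [KG_adj h1 h2 h3 h4]; simp [hvs, hvm]; omega
  have n1 : C v0 ≠ C vs := C.valid a1
  have n2 : C v0 ≠ C vm := C.valid a2
  have n3 : C vs ≠ C vm := C.valid a3
  have b1 : (C v0).val ≠ (C vs).val := fun h => n1 (Fin.ext h)
  have b2 : (C v0).val ≠ (C vm).val := fun h => n2 (Fin.ext h)
  have b3 : (C vs).val ≠ (C vm).val := fun h => n3 (Fin.ext h)
  have := (C v0).isLt
  have := (C vs).isLt
  have := (C vm).isLt
  omega

lemma card_filter_Ico {n : ℕ} (a b : ℕ) (hb : b ≤ n) :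
    ((Finset.univ : Finset (Fin n)).filter fun z => a ≤ z.val ∧ z.val < b).card = b - a := by
  rw [← Nat.card_Ico a b]
  apply Finset.card_bij (fun z _ => z.val)
  · intro z hz
    simp only [Finset.mem_filter] at hz
    exact Finset.mem_Ico.mpr ⟨hz.2.1, hz.2.2⟩
  · intro z1 h1 z2 h2 h
    exact Fin.ext h
  · intro i hi
    rw [Finset.mem_Ico] at hi
    exact ⟨⟨i, lt_of_lt_of_le hi.2 hb⟩, Finset.mem_filter.mpr ⟨Finset.mem_univ _, hi.1, hi.2⟩, rfl⟩

lemma KG_free {n s m r : ℕ} (h1 : 1 ≤ r) (h2 : r < s) (h3 : s + r ≤ m) (h4 : m < n) :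
    Free (bookGraph r) (KG n s m r) := by
  classical
  rintro ⟨f, hf⟩
  set a := f ⟨0, by omega⟩ with ha
  set b := f ⟨1, by omega⟩ with hb
  have hbook : ∀ (i j : Fin (r + 3)), i.val ≠ j.val → i.val < 2 →
      (bookGraph r).Adj i j := by
    intro i j hne hi
    rw [bookGraph, SimpleGraph.fromRel_adj]
    exact ⟨fun h => hne (congrArg Fin.val h), Or.inl hi⟩
  have hab : (KG n s m r).Adj a b := f.map_rel (hbook _ _ (by simp) (by simp))
  set T := Finset.univ.filter (fun z => (KG n s m r).Adj a z ∧ (KG n s m r).Adj b z) with hT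
  have hmem : ∀ i : Fin (r + 1), f ⟨i.val + 2, by omega⟩ ∈ T := by
    intro i
    rw [hT, Finset.mem_filter]
    refine ⟨Finset.mem_univ _, f.map_rel (hbook _ _ (by simp) (by simp)),
      f.map_rel (hbook _ _ (by simp) (by simp))⟩
  have hinj : Function.Injective (fun i : Fin (r + 1) => f ⟨i.val + 2, by omega⟩) := by
    intro i j h
    have := hf h
    have := congrArg Fin.val this
    simp at this
    exact Fin.ext this
  have hcard : r + 1 ≤ T.card := by
    have h5 : (Finset.univ.image (fun i : Fin (r + 1) => f ⟨i.val + 2, by omega⟩)) ⊆ T :=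
      Finset.image_subset_iff.mpr (fun i _ => hmem i)
    have h6 := Finset.card_le_card h5
    rwa [Finset.card_image_of_injective _ hinj, Finset.card_univ, Fintype.card_fin] at h6
  have hsmall : T.card ≤ r := by
    have adj_iff := KG_adj h1 h2 h3 h4 (n := n)
    rcases (adj_iff a b).mp hab with hc | hc | hc | hc
    · have : T ⊆ {⟨m, h4⟩} := by
        intro z hz
        rw [hT, Finset.mem_filter] at hz
        obtain ⟨-, hz1, hz2⟩ := hz
        rw [adj_iff] at hz1 hz2
        rw [Finset.mem_singleton]
        apply Fin.ext
        show z.val = m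
        omega
      calc T.card ≤ 1 := le_trans (Finset.card_le_card this) (by simp)
        _ ≤ r := h1
    · have : T ⊆ {⟨m, h4⟩} := by
        intro z hz
        rw [hT, Finset.mem_filter] at hz
        obtain ⟨-, hz1, hz2⟩ := hz
        rw [adj_iff] at hz1 hz2
        rw [Finset.mem_singleton]
        apply Fin.ext
        show z.val = m
        omega
      calc T.card ≤ 1 := le_trans (Finset.card_le_card this) (by simp)
        _ ≤ r := h1
    · obtain ⟨ham, hbr⟩ := hc
      rcases hbr with hbr | hbr
      · have : T ⊆ Finset.univ.filter fun z : Fin n => s ≤ z.val ∧ z.val < s + r := by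
          intro z hz
          rw [hT, Finset.mem_filter] at hz
          obtain ⟨-, hz1, hz2⟩ := hz
          rw [adj_iff] at hz1 hz2
          rw [Finset.mem_filter]
          refine ⟨Finset.mem_univ _, ?_⟩
          omega
        calc T.card ≤ _ := Finset.card_le_card this
          _ ≤ r := by rw [card_filter_Ico s (s + r) (by omega)]; omega
      · have : T ⊆ Finset.univ.filter fun z : Fin n => 0 ≤ z.val ∧ z.val < r := by
          intro z hz
          rw [hT, Finset.mem_filter] at hz
          obtain ⟨-, hz1, hz2⟩ := hz
          rw [adj_iff] at hz1 hz2
          rw [Finset.mem_filter]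
          refine ⟨Finset.mem_univ _, ?_⟩
          omega
        calc T.card ≤ _ := Finset.card_le_card this
          _ ≤ r := by rw [card_filter_Ico 0 r (by omega)]; omega
    · obtain ⟨hbm, har⟩ := hc
      rcases har with har | har
      · have : T ⊆ Finset.univ.filter fun z : Fin n => s ≤ z.val ∧ z.val < s + r := by
          intro z hz
          rw [hT, Finset.mem_filter] at hz
          obtain ⟨-, hz1, hz2⟩ := hz
          rw [adj_iff] at hz1 hz2
          rw [Finset.mem_filter]
          refine ⟨Finset.mem_univ _, ?_⟩
          omega
        calc T.card ≤ _ := Finset.card_le_card this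
          _ ≤ r := by rw [card_filter_Ico s (s + r) (by omega)]; omega
      · have : T ⊆ Finset.univ.filter fun z : Fin n => 0 ≤ z.val ∧ z.val < r := by
          intro z hz
          rw [hT, Finset.mem_filter] at hz
          obtain ⟨-, hz1, hz2⟩ := hz
          rw [adj_iff] at hz1 hz2
          rw [Finset.mem_filter]
          refine ⟨Finset.mem_univ _, ?_⟩
          omega
        calc T.card ≤ _ := Finset.card_le_card this
          _ ≤ r := by rw [card_filter_Ico 0 r (by omega)]; omega
  omega

set_option maxHeartbeats 2000000 in
lemma KG_spec {n s m t r : ℕ} (h1 : 1 ≤ r) (h2 : r < s) (h3 : s + r ≤ m) (h4 : m + 1 = n)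
    (h5 : s + t = m) (h6 : 1 ≤ t) :
    Real.sqrt ((s : ℝ) * (t : ℝ)) < specRad (KG n s m r) := by
  classical
  have hmn : m < n := by omega
  haveI : Nonempty (Fin n) := ⟨⟨0, by omega⟩⟩
  have hn0 : 0 < n := by omega
  obtain ⟨μ, w, hw0, hweig, hray⟩ := rayleigh_max hn0 (adjMat (KG n s m r))
    (adjMat_isHermitian _)
  have hμ := specRad_ge (KG n s m r) μ w hw0 hweig
  set rs := Real.sqrt (s : ℝ) with hrs
  set rt := Real.sqrt (t : ℝ) with hrt
  have hs0 : (0:ℝ) < (s:ℝ) := by exact_mod_cast (by omega : 0 < s)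
  have ht0 : (0:ℝ) < (t:ℝ) := by exact_mod_cast h6
  have hrs0 : 0 < rs := Real.sqrt_pos.mpr hs0
  have hrt0 : 0 < rt := Real.sqrt_pos.mpr ht0
  have hrs2 : rs * rs = (s:ℝ) := Real.mul_self_sqrt hs0.le
  have hrt2 : rt * rt = (t:ℝ) := Real.mul_self_sqrt ht0.le
  have hrs1 : 1 ≤ rs := by
    rw [hrs, show (1:ℝ) = Real.sqrt 1 by rw [Real.sqrt_one]]
    exact Real.sqrt_le_sqrt (by exact_mod_cast (by omega : 1 ≤ s))
  have hrsn : rs < (n:ℝ) := by nlinarith [hrs1, hrs2, (by exact_mod_cast (by omega : s < n) : (s:ℝ) < n)]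
  have hsqrt : Real.sqrt ((s:ℝ) * (t:ℝ)) = rs * rt := Real.sqrt_mul hs0.le _
  rw [hsqrt]
  set c := rs * rt with hc
  set v : Fin n → ℝ := fun z => if z.val < s then rt else if z.val < m then rs else 1/(n:ℝ) with hv
  have hn0' : (0:ℝ) < (n:ℝ) := by exact_mod_cast hn0
  have hvpos : ∀ z, 0 < v z := by
    intro z; rw [hv]; dsimp only; split_ifs <;> positivity
  have hMv : ∀ z : Fin n, (adjMat (KG n s m r) *ᵥ v) z
      = ∑ k, (if (KG n s m r).Adj z k then v k else 0) := by
    intro z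
    simp only [Matrix.mulVec, dotProduct]
    apply Finset.sum_congr rfl
    intro k _
    rw [adjMat_apply]
    split_ifs <;> simp
  have adj_iff := KG_adj h1 h2 h3 hmn (n := n)
  set zm : Fin n := ⟨m, hmn⟩ with hzm
  have hzmv : zm.val = m := rfl
  -- pointwise bounds
  have hL : ∀ z : Fin n, z.val < s → c * v z ≤ (adjMat (KG n s m r) *ᵥ v) z := by
    intro z hz
    rw [hMv]
    have step : ∑ k : Fin n, (if s ≤ k.val ∧ k.val < m then rs else 0)
        ≤ ∑ k : Fin n, (if (KG n s m r).Adj z k then v k else 0) := by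
      apply Finset.sum_le_sum
      intro k _
      by_cases hk : s ≤ k.val ∧ k.val < m
      · rw [if_pos hk, if_pos ((adj_iff z k).mpr (by omega))]
        rw [hv]; dsimp only
        rw [if_neg (by omega), if_pos hk.2]
      · rw [if_neg hk]
        split_ifs with h
        · exact (hvpos k).le
        · exact le_refl 0
    have hcount : ∑ k : Fin n, (if s ≤ k.val ∧ k.val < m then rs else 0) = (t:ℝ) * rs := by
      rw [← Finset.sum_filter, Finset.sum_const, card_filter_Ico s m (by omega),
        nsmul_eq_mul, (by omega : m - s = t)]
    have hvz : v z = rt := by rw [hv]; dsimp only; rw [if_pos hz]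
    have heq : c * rt = (t:ℝ) * rs := by rw [hc]; linear_combination rs * hrt2
    rw [hvz]
    linarith [step, hcount, heq]
  have hR : ∀ z : Fin n, s ≤ z.val → z.val < m → c * v z ≤ (adjMat (KG n s m r) *ᵥ v) z := by
    intro z hz1 hz2
    rw [hMv]
    have step : ∑ k : Fin n, (if 0 ≤ k.val ∧ k.val < s then rt else 0)
        ≤ ∑ k : Fin n, (if (KG n s m r).Adj z k then v k else 0) := by
      apply Finset.sum_le_sum
      intro k _
      by_cases hk : 0 ≤ k.val ∧ k.val < s
      · rw [if_pos hk, if_pos ((adj_iff z k).mpr (by omega))]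
        rw [hv]; dsimp only
        rw [if_pos hk.2]
      · rw [if_neg hk]
        split_ifs with h
        · exact (hvpos k).le
        · exact le_refl 0
    have hcount : ∑ k : Fin n, (if 0 ≤ k.val ∧ k.val < s then rt else 0) = (s:ℝ) * rt := by
      rw [← Finset.sum_filter, Finset.sum_const, card_filter_Ico 0 s (by omega),
        nsmul_eq_mul, (by omega : s - 0 = s)]
    have hvz : v z = rs := by rw [hv]; dsimp only; rw [if_neg (by omega), if_pos hz2]
    have heq : c * rs = (s:ℝ) * rt := by rw [hc]; linear_combination rt * hrs2
    rw [hvz]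
    linarith [step, hcount, heq]
  have hM : c * v zm < (adjMat (KG n s m r) *ᵥ v) zm := by
    rw [hMv]
    have step : ∑ k : Fin n, (if 0 ≤ k.val ∧ k.val < r then rt else 0)
        ≤ ∑ k : Fin n, (if (KG n s m r).Adj zm k then v k else 0) := by
      apply Finset.sum_le_sum
      intro k _
      by_cases hk : 0 ≤ k.val ∧ k.val < r
      · rw [if_pos hk, if_pos ((adj_iff zm k).mpr (by omega))]
        rw [hv]; dsimp only
        rw [if_pos (by omega)]
      · rw [if_neg hk]
        split_ifs with h
        · exact (hvpos k).le
        · exact le_refl 0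
    have hcount : ∑ k : Fin n, (if 0 ≤ k.val ∧ k.val < r then rt else 0) = (r:ℝ) * rt := by
      rw [← Finset.sum_filter, Finset.sum_const, card_filter_Ico 0 r (by omega),
        nsmul_eq_mul, (by omega : r - 0 = r)]
    have hvz : v zm = 1/(n:ℝ) := by rw [hv]; dsimp only; rw [if_neg (by omega), if_neg (by omega)]
    have hr1 : (1:ℝ) ≤ (r:ℝ) := by exact_mod_cast h1
    calc c * v zm = rs * rt * (1/(n:ℝ)) := by rw [hvz, hc]
      _ < (r:ℝ) * rt := by
          rw [div_eq_mul_inv, one_mul]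
          have hlt : rs * rt * (n:ℝ)⁻¹ < rt := by
            rw [mul_comm rs rt, mul_assoc]
            have : rs * (n:ℝ)⁻¹ < 1 := by
              have h8 : rs / (n:ℝ) < 1 := (div_lt_one hn0').mpr hrsn
              rwa [div_eq_mul_inv] at h8
            nlinarith [hrt0]
          nlinarith [hrt0, hr1, hlt]
      _ = ∑ k : Fin n, (if 0 ≤ k.val ∧ k.val < r then rt else 0) := hcount.symm
      _ ≤ _ := step
  -- combine
  have hpw : ∀ z : Fin n, c * v z ≤ (adjMat (KG n s m r) *ᵥ v) z := by
    intro z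
    by_cases hz1 : z.val < s
    · exact hL z hz1
    · by_cases hz2 : z.val < m
      · exact hR z (by omega) hz2
      · have : z = zm := by apply Fin.ext; rw [hzmv]; omega
        rw [this]; exact hM.le
  have key : c * (v ⬝ᵥ v) < v ⬝ᵥ (adjMat (KG n s m r) *ᵥ v) := by
    rw [dotProduct, dotProduct, Finset.mul_sum]
    apply Finset.sum_lt_sum
    · intro i _
      have := mul_le_mul_of_nonneg_right (hpw i) (hvpos i).le
      nlinarith [this]
    · refine ⟨zm, Finset.mem_univ _, ?_⟩
      have := mul_lt_mul_of_pos_right hM (hvpos zm)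
      nlinarith [this]
  have hvv : 0 < v ⬝ᵥ v := by
    rw [dotProduct]
    exact Finset.sum_pos (fun i _ => mul_pos (hvpos i) (hvpos i)) Finset.univ_nonempty
  have hcμ : c < μ := by
    have h7 : c * (v ⬝ᵥ v) < μ * (v ⬝ᵥ v) := lt_of_lt_of_le key (hray v)
    exact lt_of_mul_lt_mul_right h7 hvv.le
  linarith


lemma indep_of_edgesIn_zero {V : Type*} [Fintype V] (G : SimpleGraph V) (S : Finset V)
    (h : edgesIn G S = 0) : ∀ a ∈ S, ∀ b ∈ S, ¬ G.Adj a b := by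
  classical
  intro a ha b hb hab
  unfold edgesIn at h
  rw [Finset.card_eq_zero] at h
  have hmem : s(a, b) ∈ (G.edgeFinset.filter fun e : Sym2 V => ∀ v ∈ e, v ∈ S) := by
    refine Finset.mem_filter.mpr ⟨SimpleGraph.mem_edgeFinset.mpr hab, ?_⟩
    intro v hv
    rcases Sym2.mem_iff.mp hv with rfl | rfl
    exacts [ha, hb]
  have : s(a, b) ∈ (∅ : Finset (Sym2 V)) := by
    rw [← h]
    convert hmem using 2
  exact absurd this (Finset.notMem_empty _)

lemma degIn_eq {V : Type*} [DecidableEq V] (G : SimpleGraph V) [DecidableRel G.Adj]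
    (S : Finset V) (v : V) : (degIn G S v : ℕ) = (S.filter fun w => G.Adj v w).card := by
  unfold degIn
  convert rfl

set_option maxHeartbeats 4000000 in
/-- In the extremal setup, if `A` spans no edges then
`Σ_{w∈B} d̄_A(w) x_{u*} + Σ_{w∈B} Γ_w < |A| x_{u*}`, where `d̄_A(w) = |A| − d_A(w)` and
`Γ_w = d_A(w)(x_{u*} − x_w)` is the residual index of `w`. -/
theorem residual_index_bound (r n : ℕ) (hr : 1 ≤ r) (hn : 8 * (r ^ 2 + r + 4) ≤ n)
    (G : SimpleGraph (Fin n)) (hconn : G.Connected) (hnonbip : ¬ G.Colorable 2)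
    (hfree : Free (bookGraph r) G)
    (hmax : ∀ H : SimpleGraph (Fin n), ¬ H.Colorable 2 → Free (bookGraph r) H →
      specRad H ≤ specRad G)
    (x : Fin n → ℝ) (hxpos : ∀ v, 0 < x v) (hxunit : ∑ v, x v ^ 2 = 1)
    (heig : adjMat G *ᵥ x = specRad G • x)
    (u : Fin n) (hu : ∀ v, x v ≤ x u)
    (A B : Finset (Fin n)) (hA : ∀ v, v ∈ A ↔ G.Adj u v)
    (hB : ∀ v, v ∈ B ↔ v ≠ u ∧ v ∉ A)
    (hEA : edgesIn G A = 0) :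
    (∑ w ∈ B, ((A.card : ℝ) - (degIn G A w : ℝ)) * x u) +
        ∑ w ∈ B, (degIn G A w : ℝ) * (x u - x w) < (A.card : ℝ) * x u := by
  classical
  have eig : ∀ v : Fin n, ∑ w, (if G.Adj v w then x w else 0) = specRad G * x v := by
    intro v
    have h0 := congrFun heig v
    simp only [Matrix.mulVec, dotProduct, Pi.smul_apply, smul_eq_mul] at h0
    rw [← h0]
    apply Finset.sum_congr rfl
    intro w _
    rw [adjMat_apply]
    split_ifs <;> simp
  have huA : u ∉ A := fun h => G.irrefl ((hA u).mp h)
  have huB : u ∉ B := fun h => ((hB u).mp h).1 rfl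
  have hABd : Disjoint A B := by
    rw [Finset.disjoint_left]
    intro w hw hw'
    exact ((hB w).mp hw').2 hw
  have huAB : u ∉ A ∪ B := by simp [huA, huB]
  have huniv : (Finset.univ : Finset (Fin n)) = insert u (A ∪ B) := by
    ext w
    simp only [Finset.mem_univ, true_iff, Finset.mem_insert, Finset.mem_union]
    by_cases h1 : w = u
    · exact Or.inl h1
    · by_cases h2 : w ∈ A
      · exact Or.inr (Or.inl h2)
      · exact Or.inr (Or.inr ((hB w).mpr ⟨h1, h2⟩))
  have hsplit : ∀ f : Fin n → ℝ, ∑ w, f w = f u + (∑ w ∈ A, f w + ∑ w ∈ B, f w) := by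
    intro f
    rw [huniv, Finset.sum_insert huAB, Finset.sum_union hABd]
  have hAfil : A = Finset.univ.filter (fun w => G.Adj u w) := by
    ext w
    simp [hA w]
  have hindep := indep_of_edgesIn_zero G A hEA
  have hu_eq : specRad G * x u = ∑ a ∈ A, x a := by
    rw [← eig u, hAfil, Finset.sum_filter]
  have ha_eq : ∀ a ∈ A, specRad G * x a
      = x u + ∑ w ∈ B, (if G.Adj a w then x w else 0) := by
    intro a ha
    rw [← eig a, hsplit (fun w => if G.Adj a w then x w else 0)]
    have e1 : (if G.Adj a u then x u else 0) = x u := if_pos (((hA a).mp ha).symm)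
    have e2 : (∑ w ∈ A, if G.Adj a w then x w else 0) = 0 :=
      Finset.sum_eq_zero fun b hb => if_neg (hindep a ha b hb)
    rw [e1, e2, zero_add]
  have hBdeg : ∀ w ∈ B, (∑ a ∈ A, if G.Adj a w then x w else 0)
      = (degIn G A w : ℝ) * x w := by
    intro w _
    rw [← Finset.sum_filter, Finset.sum_const, nsmul_eq_mul]
    congr 2
    rw [degIn_eq]
    apply congrArg
    apply Finset.filter_congr
    intro a _
    rw [G.adj_comm]
  have hsum : specRad G * (specRad G * x u)
      = (A.card : ℝ) * x u + ∑ w ∈ B, (degIn G A w : ℝ) * x w := by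
    calc specRad G * (specRad G * x u) = ∑ a ∈ A, specRad G * x a := by
          rw [hu_eq, Finset.mul_sum]
      _ = ∑ a ∈ A, (x u + ∑ w ∈ B, if G.Adj a w then x w else 0) :=
          Finset.sum_congr rfl ha_eq
      _ = (A.card : ℝ) * x u + ∑ a ∈ A, ∑ w ∈ B, (if G.Adj a w then x w else 0) := by
          rw [Finset.sum_add_distrib, Finset.sum_const, nsmul_eq_mul]
      _ = (A.card : ℝ) * x u + ∑ w ∈ B, ∑ a ∈ A, (if G.Adj a w then x w else 0) := by
          rw [Finset.sum_comm]
      _ = _ := by rw [Finset.sum_congr rfl hBdeg]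
  have hcards : A.card + B.card + 1 = n := by
    have h0 := congrArg Finset.card huniv
    rw [Finset.card_insert_of_notMem huAB, Finset.card_union_of_disjoint hABd,
      Finset.card_univ, Fintype.card_fin] at h0
    omega
  have key : (A.card : ℝ) * (B.card : ℝ) < specRad G ^ 2 := by
    have hq : r ≤ r ^ 2 := Nat.le_self_pow two_ne_zero r
    have hexp : 8 * (r ^ 2 + r + 4) = 8 * r ^ 2 + 8 * r + 32 := by ring
    have hn16 : 16 * r + 32 ≤ n := by nlinarith [hn, hq]
    set s : ℕ := n / 2 with hs
    set m : ℕ := n - 1 with hm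
    set t : ℕ := m - s with ht
    have c1 : 1 ≤ r := hr
    have c2 : r < s := by omega
    have c3 : s + r ≤ m := by omega
    have c4 : m + 1 = n := by omega
    have c5 : s + t = m := by omega
    have c6 : 1 ≤ t := by omega
    have hnb := KG_nonbip c1 c2 c3 (show m < n by omega)
    have hfr := KG_free c1 c2 c3 (show m < n by omega)
    have hlow := KG_spec c1 c2 c3 c4 c5 c6
    have hup := hmax (KG n s m r) hnb hfr
    have hsr : Real.sqrt ((s:ℝ) * (t:ℝ)) < specRad G := lt_of_lt_of_le hlow hup
    have hst0 : (0:ℝ) ≤ (s:ℝ) * (t:ℝ) := by positivity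
    have h10 : (s:ℝ) * (t:ℝ) < specRad G ^ 2 := by
      nlinarith [Real.sq_sqrt hst0, Real.sqrt_nonneg ((s:ℝ) * (t:ℝ)), hsr]
    have h11 : (A.card : ℤ) * (B.card : ℤ) ≤ (s : ℤ) * (t : ℤ) := by
      have habn : A.card + B.card = m := by omega
      have hab : (A.card : ℤ) + (B.card : ℤ) = (m : ℤ) := by exact_mod_cast habn
      have h4ab : 4 * ((A.card:ℤ) * (B.card:ℤ)) ≤ ((A.card:ℤ) + (B.card:ℤ))^2 := by
        nlinarith [sq_nonneg ((A.card:ℤ) - (B.card:ℤ))]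
      rcases Nat.even_or_odd n with he | ho
      · obtain ⟨k, hk⟩ := he
        have hk1 : 1 ≤ k := by omega
        have hss : (s:ℤ) = (k:ℤ) := by exact_mod_cast (show s = k by omega)
        have hts : (t:ℤ) = (k:ℤ) - 1 := by
          have h' : t + 1 = k := by omega
          have h'' : (t:ℤ) + 1 = (k:ℤ) := by exact_mod_cast h'
          linarith
        have hms : (m:ℤ) = 2*(k:ℤ) - 1 := by
          have h' : m + 1 = 2 * k := by omega
          have h'' : (m:ℤ) + 1 = 2*(k:ℤ) := by exact_mod_cast h'
          linarith
        have hlt : (A.card:ℤ) * (B.card:ℤ) < (s:ℤ)*(t:ℤ) + 1 := by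
          nlinarith [h4ab]
        linarith [Int.lt_add_one_iff.mp hlt]
      · obtain ⟨k, hk⟩ := ho
        have hss : (s:ℤ) = (k:ℤ) := by exact_mod_cast (show s = k by omega)
        have hts : (t:ℤ) = (k:ℤ) := by exact_mod_cast (show t = k by omega)
        have hms : (m:ℤ) = 2*(k:ℤ) := by exact_mod_cast (show m = 2*k by omega)
        nlinarith [h4ab]
    have h12 : (A.card : ℝ) * (B.card : ℝ) ≤ (s:ℝ) * (t:ℝ) := by exact_mod_cast h11
    linarith
  have hgoal : (∑ w ∈ B, ((A.card : ℝ) - (degIn G A w : ℝ)) * x u)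
      + ∑ w ∈ B, (degIn G A w : ℝ) * (x u - x w)
      = (B.card : ℝ) * ((A.card : ℝ) * x u) - ∑ w ∈ B, (degIn G A w : ℝ) * x w := by
    rw [← Finset.sum_add_distrib]
    have hterm : ∀ w ∈ B, ((A.card : ℝ) - (degIn G A w : ℝ)) * x u
        + (degIn G A w : ℝ) * (x u - x w)
        = (A.card : ℝ) * x u - (degIn G A w : ℝ) * x w := fun w _ => by ring
    rw [Finset.sum_congr rfl hterm, Finset.sum_sub_distrib, Finset.sum_const, nsmul_eq_mul]
  rw [hgoal]
  have h13 : (A.card:ℝ) * (B.card:ℝ) * x u < specRad G ^ 2 * x u :=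
    mul_lt_mul_of_pos_right key (hxpos u)
  nlinarith [hsum, h13]
end

section
/- Let r ≥ 1 be an integer and let s, t be positive integers with r ≤ t and s ≥ t + 2. Then ρ(K_{s−1,t+1}^{r,r}) > ρ(K_{s,t}^{r,r}); that is, moving one vertex from the larger part to the smaller part of K_{s,t}^{r,r} strictly increases the spectral radius. -/
open Finset Matrix

noncomputable section Extra
noncomputable section SpecGeneral

variable {V : Type*} [Fintype V] [DecidableEq V] [Nonempty V]
set_option linter.unusedSectionVars false

local notation "E" => EuclideanSpace ℝ V

/-- the set of eigenvalues -/
def eigSet (A : Matrix V V ℝ) : Set ℝ := {μ : ℝ | ∃ v : V → ℝ, v ≠ 0 ∧ A *ᵥ v = μ • v}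

lemma nontrivE : Nontrivial E := (WithLp.equiv 2 (V → ℝ)).nontrivial

lemma inner_euclid (x y : E) : (inner ℝ x y : ℝ) =
    (WithLp.equiv 2 (V → ℝ) x) ⬝ᵥ (WithLp.equiv 2 (V → ℝ) y) := by
  rw [PiLp.inner_apply]
  simp [dotProduct, mul_comm]

lemma toEuclideanLin_mulVec (A : Matrix V V ℝ) (x : E) :
    WithLp.equiv 2 (V → ℝ) (Matrix.toEuclideanLin A x) = A *ᵥ (WithLp.equiv 2 (V → ℝ) x) := by
  simp [Matrix.toEuclideanLin_apply]

lemma bddAbove_rayleigh (A : Matrix V V ℝ) :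
    BddAbove (Set.range fun x : { x : E // x ≠ 0 } =>
      RCLike.re (inner ℝ ((Matrix.toEuclideanLin A) x) (x : E) : ℝ) / ‖(x : E)‖ ^ 2) := by
  set T := Matrix.toEuclideanLin A with hT
  refine ⟨‖LinearMap.toContinuousLinearMap T‖, ?_⟩
  rintro μ ⟨⟨x, hx⟩, rfl⟩
  have hx2 : (0:ℝ) < ‖x‖ ^ 2 := pow_pos (norm_pos_iff.mpr hx) 2
  rw [div_le_iff₀ hx2]
  calc RCLike.re (inner ℝ (T x) (x : E) : ℝ) ≤ ‖T x‖ * ‖x‖ := by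
        simpa using real_inner_le_norm (T x) x
    _ ≤ ‖LinearMap.toContinuousLinearMap T‖ * ‖x‖ * ‖x‖ := by
        have := (LinearMap.toContinuousLinearMap T).le_opNorm x
        simp only [LinearMap.coe_toContinuousLinearMap'] at this
        nlinarith [norm_nonneg x]
    _ = ‖LinearMap.toContinuousLinearMap T‖ * ‖x‖ ^ 2 := by ring

section
variable (A : Matrix V V ℝ) (hA : A.IsHermitian)

lemma lam_isGreatest (hA : A.IsHermitian) :
    IsGreatest (eigSet A)
      (⨆ x : { x : E // x ≠ 0 },
        RCLike.re (inner ℝ ((Matrix.toEuclideanLin A) x) (x : E) : ℝ) / ‖(x : E)‖ ^ 2) := by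
  haveI : Nontrivial E := nontrivE
  set T := Matrix.toEuclideanLin A with hT
  have hsym : T.IsSymmetric := Matrix.isHermitian_iff_isSymmetric.mp hA
  set lam : ℝ := ⨆ x : { x : E // x ≠ 0 }, RCLike.re (inner ℝ (T x) (x : E) : ℝ) / ‖(x : E)‖ ^ 2
    with hlam
  have hbdd : BddAbove (Set.range fun x : { x : E // x ≠ 0 } =>
      RCLike.re (inner ℝ (T x) (x : E) : ℝ) / ‖(x : E)‖ ^ 2) := bddAbove_rayleigh A
  constructor
  · -- lam is an eigenvalue
    have h1 := hsym.hasEigenvalue_iSup_of_finiteDimensional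
    obtain ⟨v, hv⟩ := h1.exists_hasEigenvector
    refine ⟨WithLp.equiv 2 (V → ℝ) v, ?_, ?_⟩
    · simpa using hv.right
    · have := hv.apply_eq_smul
      have h2 : WithLp.equiv 2 (V → ℝ) (T v) =
          WithLp.equiv 2 (V → ℝ) ((lam : ℝ) • v) := by rw [this]; rfl
      rw [toEuclideanLin_mulVec] at h2
      exact h2
  · -- upper bound
    rintro μ ⟨v, hv0, hv⟩
    set x : E := (WithLp.equiv 2 (V → ℝ)).symm v with hx
    have hxne : x ≠ 0 := by
      simpa [hx] using hv0
    have hTx : T x = μ • x := by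
      apply (WithLp.equiv 2 (V → ℝ)).injective
      rw [toEuclideanLin_mulVec]
      simp [hx]
      exact hv
    have hnorm : (0:ℝ) < ‖x‖ ^ 2 := pow_pos (norm_pos_iff.mpr hxne) 2
    have : RCLike.re (inner ℝ (T x) (x : E) : ℝ) / ‖x‖ ^ 2 = μ := by
      rw [hTx, real_inner_smul_left, real_inner_self_eq_norm_sq]
      field_simp
      rfl
    calc μ = RCLike.re (inner ℝ (T x) (x : E) : ℝ) / ‖x‖ ^ 2 := this.symm
      _ ≤ lam := le_ciSup hbdd ⟨x, hxne⟩

lemma sSup_eigSet_mem (hA : A.IsHermitian) : sSup (eigSet A) ∈ eigSet A := by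
  have h := lam_isGreatest A hA
  rw [h.csSup_eq]
  exact h.1

lemma rayleigh_le_sSup (hA : A.IsHermitian) (x : V → ℝ) :
    (A *ᵥ x) ⬝ᵥ x ≤ sSup (eigSet A) * (x ⬝ᵥ x) := by
  have h := lam_isGreatest A hA
  rcases eq_or_ne x 0 with rfl | hx
  · simp
  rw [h.csSup_eq]
  set lam := ⨆ x : { x : E // x ≠ 0 },
      RCLike.re (inner ℝ ((Matrix.toEuclideanLin A) x) (x : E) : ℝ) / ‖(x : E)‖ ^ 2 with hlam
  set x' : E := (WithLp.equiv 2 (V → ℝ)).symm x with hx'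
  have hxne : x' ≠ 0 := by simpa [hx'] using hx
  have hbdd : BddAbove (Set.range fun y : { y : E // y ≠ 0 } =>
      RCLike.re (inner ℝ ((Matrix.toEuclideanLin A) y) (y : E) : ℝ) / ‖(y : E)‖ ^ 2) :=
    bddAbove_rayleigh A
  have hle : RCLike.re (inner ℝ ((Matrix.toEuclideanLin A) x') (x' : E) : ℝ) / ‖x'‖ ^ 2 ≤ lam :=
    le_ciSup hbdd ⟨x', hxne⟩
  have hnorm : ‖x'‖ ^ 2 = x ⬝ᵥ x := by
    rw [← real_inner_self_eq_norm_sq, inner_euclid]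
    simp [hx']
  have hinner : RCLike.re (inner ℝ ((Matrix.toEuclideanLin A) x') (x' : E) : ℝ) = (A *ᵥ x) ⬝ᵥ x := by
    rw [RCLike.re_to_real, inner_euclid, toEuclideanLin_mulVec]
    simp [hx']
  have hdpos : (0:ℝ) < x ⬝ᵥ x := by
    rw [← hnorm]; exact pow_pos (norm_pos_iff.mpr hxne) 2
  rw [hnorm, hinner, div_le_iff₀ hdpos] at hle
  exact hle

end

section
variable (A : Matrix V V ℝ)

lemma qf_eq (x : V → ℝ) : (A *ᵥ x) ⬝ᵥ x = ∑ i, ∑ j, A i j * x j * x i := by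
  simp [dotProduct, Matrix.mulVec, Finset.sum_mul]

lemma exists_nonneg_eigenvector (hA : A.IsHermitian) (hpos : ∀ i j, 0 ≤ A i j) :
    ∃ v : V → ℝ, v ≠ 0 ∧ (∀ i, 0 ≤ v i) ∧ A *ᵥ v = sSup (eigSet A) • v := by
  haveI : Nontrivial E := nontrivE
  obtain ⟨v, hv0, hveq⟩ := sSup_eigSet_mem A hA
  set L := sSup (eigSet A) with hL
  set w : V → ℝ := fun i => |v i| with hw
  have hw0 : w ≠ 0 := fun h => hv0 (funext fun i => abs_eq_zero.mp (congrFun h i))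
  have hww : w ⬝ᵥ w = v ⬝ᵥ v := by
    simp only [dotProduct, hw, abs_mul_abs_self]
  have hq : (A *ᵥ v) ⬝ᵥ v ≤ (A *ᵥ w) ⬝ᵥ w := by
    rw [qf_eq, qf_eq]
    refine Finset.sum_le_sum fun i _ => Finset.sum_le_sum fun j _ => ?_
    calc A i j * v j * v i ≤ |A i j * v j * v i| := le_abs_self _
      _ = A i j * w j * w i := by
          rw [abs_mul, abs_mul, abs_of_nonneg (hpos i j)]
  have hAv : (A *ᵥ v) ⬝ᵥ v = L * (v ⬝ᵥ v) := by
    rw [hveq]; simp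
  have hub : (A *ᵥ w) ⬝ᵥ w ≤ L * (w ⬝ᵥ w) := rayleigh_le_sSup A hA w
  have heq : (A *ᵥ w) ⬝ᵥ w = L * (w ⬝ᵥ w) := by
    refine le_antisymm hub ?_
    rw [hww]; rw [hAv] at hq; linarith
  -- move to Euclidean space
  set T := Matrix.toEuclideanLin A with hT
  have hsym : T.IsSymmetric := Matrix.isHermitian_iff_isSymmetric.mp hA
  set Tc := hsym.toSelfAdjoint with hTc
  set x₀ : E := (WithLp.equiv 2 (V → ℝ)).symm w with hx₀
  have hx₀ne : x₀ ≠ 0 := by simpa [hx₀] using hw0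
  have hdot_norm : ∀ y : E, (WithLp.equiv 2 (V → ℝ) y) ⬝ᵥ (WithLp.equiv 2 (V → ℝ) y)
      = ‖y‖ ^ 2 := fun y => by
    rw [← inner_euclid, real_inner_self_eq_norm_sq]
  have hre : ∀ y : E, ContinuousLinearMap.reApplyInnerSelf (Tc : E →L[ℝ] E) y
      = (A *ᵥ (WithLp.equiv 2 (V → ℝ) y)) ⬝ᵥ (WithLp.equiv 2 (V → ℝ) y) := by
    intro y
    rw [ContinuousLinearMap.reApplyInnerSelf_apply]
    have : ((Tc : E →L[ℝ] E) y) = T y := hsym.toSelfAdjoint_apply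
    rw [this, RCLike.re_to_real, inner_euclid, toEuclideanLin_mulVec]
  have hwwpos : (0:ℝ) < w ⬝ᵥ w := by
    have := hdot_norm x₀
    simp only [hx₀, Equiv.apply_symm_apply] at this
    rw [this]
    exact pow_pos (norm_pos_iff.mpr hx₀ne) 2
  have hmax : IsMaxOn (ContinuousLinearMap.reApplyInnerSelf (Tc : E →L[ℝ] E))
      (Metric.sphere (0:E) ‖x₀‖) x₀ := by
    intro y hy
    have hyn : ‖y‖ = ‖x₀‖ := by simpa using hy
    have h1 : ContinuousLinearMap.reApplyInnerSelf (Tc : E →L[ℝ] E) y ≤ L * ‖y‖ ^ 2 := by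
      rw [hre y, ← hdot_norm y]
      exact rayleigh_le_sSup A hA _
    have h2 : ContinuousLinearMap.reApplyInnerSelf (Tc : E →L[ℝ] E) x₀ = L * ‖x₀‖ ^ 2 := by
      rw [hre x₀]
      simp only [hx₀, Equiv.apply_symm_apply]
      rw [heq]
      congr 1
      have := hdot_norm x₀
      simpa only [hx₀, Equiv.apply_symm_apply] using this
    simp only [Set.mem_setOf_eq]
    rw [h2, ← hyn]
    exact h1
  have hE := Tc.prop.hasEigenvector_of_isMaxOn hx₀ne hmax
  have happ := hE.apply_eq_smul
  have hc : (⨆ x : { x : E // x ≠ 0 },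
      ContinuousLinearMap.rayleighQuotient (Tc : E →L[ℝ] E) (x : E)) = L := by
    rw [hL, (lam_isGreatest A hA).csSup_eq]
    refine iSup_congr fun x => ?_
    rw [ContinuousLinearMap.rayleighQuotient, ContinuousLinearMap.reApplyInnerSelf_apply]
    have : ((Tc : E →L[ℝ] E) (x : E)) = T (x : E) := hsym.toSelfAdjoint_apply
    rw [this]
  refine ⟨w, hw0, fun i => abs_nonneg _, ?_⟩
  have h3 : ((Tc : E →L[ℝ] E) : E →ₗ[ℝ] E) x₀ = T x₀ := hsym.toSelfAdjoint_apply
  rw [h3, hc] at happ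
  have h4 := congrArg (WithLp.equiv 2 (V → ℝ)) happ
  rw [toEuclideanLin_mulVec] at h4
  simpa [hx₀] using h4

end

end SpecGeneral

def Mstr (s t r : ℕ) : Matrix (Option (Fin s ⊕ Fin t)) (Option (Fin s ⊕ Fin t)) ℝ :=
  fun u v => match u, v with
  | none, none => 0
  | none, some (Sum.inl a) => if a.val < r then 1 else 0
  | none, some (Sum.inr b) => if b.val < r then 1 else 0
  | some (Sum.inl a), none => if a.val < r then 1 else 0
  | some (Sum.inr b), none => if b.val < r then 1 else 0
  | some (Sum.inl _), some (Sum.inr _) => 1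
  | some (Sum.inr _), some (Sum.inl _) => 1
  | some (Sum.inl _), some (Sum.inl _) => 0
  | some (Sum.inr _), some (Sum.inr _) => 0

lemma adjMat_Kstrr (s t r : ℕ) : adjMat (Kstrr s t r) = Mstr s t r := by
  classical
  funext u v
  show (if (Kstrr s t r).Adj u v then (1:ℝ) else 0) = Mstr s t r u v
  rcases u with _ | (a | b) <;> rcases v with _ | (c | d) <;>
    simp [Kstrr, SimpleGraph.fromRel_adj, Mstr] <;> split_ifs <;> simp_all

lemma Mstr_isHermitian (s t r : ℕ) : (Mstr s t r).IsHermitian := by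
  rw [Matrix.IsHermitian]
  funext u v
  rcases u with _ | (a | b) <;> rcases v with _ | (c | d) <;>
    simp [Matrix.conjTranspose_apply, Mstr]

lemma Mstr_nonneg (s t r : ℕ) (u v : Option (Fin s ⊕ Fin t)) : 0 ≤ Mstr s t r u v := by
  rcases u with _ | (a | b) <;> rcases v with _ | (c | d) <;>
    simp [Mstr] <;> split_ifs <;> norm_num

lemma sum_ite_fin {n r : ℕ} (hrn : r ≤ n) (c : ℝ) :
    ∑ a : Fin n, (if a.val < r then c else 0) = r * c := by
  rw [Fin.sum_univ_eq_sum_range (fun i => if i < r then c else 0) n, Finset.sum_ite,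
    Finset.sum_const, Finset.sum_const]
  have : (Finset.range n).filter (· < r) = Finset.range r := by
    ext k; simp; omega
  rw [this, Finset.card_range]
  simp [mul_comm]

section rows
variable (s t r : ℕ) (x : Option (Fin s ⊕ Fin t) → ℝ)

lemma Mstr_row_none :
    (Mstr s t r *ᵥ x) none =
      (∑ a : Fin s, if a.val < r then x (some (Sum.inl a)) else 0) +
      (∑ b : Fin t, if b.val < r then x (some (Sum.inr b)) else 0) := by
  simp [Matrix.mulVec, dotProduct, Fintype.sum_option, Fintype.sum_sum_type, Mstr,
    ite_mul, one_mul, zero_mul]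

lemma Mstr_row_inl (a : Fin s) :
    (Mstr s t r *ᵥ x) (some (Sum.inl a)) =
      (if a.val < r then x none else 0) + ∑ b : Fin t, x (some (Sum.inr b)) := by
  simp [Matrix.mulVec, dotProduct, Fintype.sum_option, Fintype.sum_sum_type, Mstr,
    ite_mul, one_mul, zero_mul]

lemma Mstr_row_inr (b : Fin t) :
    (Mstr s t r *ᵥ x) (some (Sum.inr b)) =
      (if b.val < r then x none else 0) + ∑ a : Fin s, x (some (Sum.inl a)) := by
  simp [Matrix.mulVec, dotProduct, Fintype.sum_option, Fintype.sum_sum_type, Mstr,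
    ite_mul, one_mul, zero_mul]

lemma Mstr_qf :
    (Mstr s t r *ᵥ x) ⬝ᵥ x =
      2 * x none * ((∑ a : Fin s, if a.val < r then x (some (Sum.inl a)) else 0) +
        (∑ b : Fin t, if b.val < r then x (some (Sum.inr b)) else 0)) +
      2 * ((∑ a : Fin s, x (some (Sum.inl a))) * (∑ b : Fin t, x (some (Sum.inr b)))) := by
  rw [dotProduct]
  rw [Fintype.sum_option]
  rw [Fintype.sum_sum_type]
  simp only [Mstr_row_none, Mstr_row_inl, Mstr_row_inr, add_mul, ite_mul, zero_mul,
    Finset.sum_add_distrib]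
  have h1 : ∀ {n : ℕ} (f : Fin n → ℝ) (c : ℝ),
      ∑ i : Fin n, (if i.val < r then c * f i else 0) = c * ∑ i : Fin n, (if i.val < r then f i else 0) := by
    intro n f c
    rw [Finset.mul_sum]
    exact Finset.sum_congr rfl fun i _ => by split_ifs <;> simp
  rw [h1, h1, ← Finset.mul_sum, ← Finset.mul_sum]
  ring

end rows
end Extra



set_option maxHeartbeats 1000000 in
/-- Balancing the two sides of `K_{s,t}^{r,r}` strictly increases the spectral radius. -/
theorem specRad_Kstrr_balance (r s t : ℕ) (hr : 1 ≤ r) (hrt : r ≤ t) (hst : t + 2 ≤ s) :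
    specRad (Kstrr s t r) < specRad (Kstrr (s - 1) (t + 1) r) := by
  obtain ⟨s', rfl⟩ : ∃ s', s = s' + 1 := ⟨s - 1, by omega⟩
  have hs1 : s' + 1 - 1 = s' := rfl
  rw [hs1]
  have hts' : t < s' := by omega
  have hrs : r < s' := by omega
  have hspec : specRad (Kstrr (s' + 1) t r) = sSup (eigSet (Mstr (s' + 1) t r)) := by
    rw [show specRad (Kstrr (s' + 1) t r)
        = sSup (eigSet (adjMat (Kstrr (s' + 1) t r))) from rfl, adjMat_Kstrr]
  have hspec' : specRad (Kstrr s' (t + 1) r) = sSup (eigSet (Mstr s' (t + 1) r)) := by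
    rw [show specRad (Kstrr s' (t + 1) r)
        = sSup (eigSet (adjMat (Kstrr s' (t + 1) r))) from rfl, adjMat_Kstrr]
  rw [hspec, hspec']
  obtain ⟨x, hx0, hxn, hxe⟩ := exists_nonneg_eigenvector (Mstr (s' + 1) t r)
    (Mstr_isHermitian _ _ _) (Mstr_nonneg _ _ _)
  set L := sSup (eigSet (Mstr (s' + 1) t r)) with hLdef
  set L' := sSup (eigSet (Mstr s' (t + 1) r)) with hL'def
  clear_value L L'
  set x0 := x none with hx0def
  set P := ∑ a : Fin (s' + 1), x (some (Sum.inl a)) with hPdef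
  set Q := ∑ b : Fin t, x (some (Sum.inr b)) with hQdef
  set S1 := ∑ a : Fin (s' + 1), (if a.val < r then x (some (Sum.inl a)) else 0) with hS1def
  set S2 := ∑ b : Fin t, (if b.val < r then x (some (Sum.inr b)) else 0) with hS2def
  set b0 := x (some (Sum.inl (Fin.last s'))) with hb0def
  -- basic nonnegativity
  have hx0nn : 0 ≤ x0 := hxn _
  have hPnn : 0 ≤ P := Finset.sum_nonneg fun _ _ => hxn _
  have hQnn : 0 ≤ Q := Finset.sum_nonneg fun _ _ => hxn _
  have hb0nn : 0 ≤ b0 := hxn _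
  -- row equations
  have e1 : ∀ a : Fin (s' + 1),
      (if a.val < r then x0 else 0) + Q = L * x (some (Sum.inl a)) := by
    intro a
    have h := congrFun hxe (some (Sum.inl a))
    rw [Mstr_row_inl] at h
    simpa using h
  have e2 : ∀ b : Fin t,
      (if b.val < r then x0 else 0) + P = L * x (some (Sum.inr b)) := by
    intro b
    have h := congrFun hxe (some (Sum.inr b))
    rw [Mstr_row_inr] at h
    simpa using h
  have hb : Q = L * b0 := by
    have h := e1 (Fin.last s')
    rw [if_neg (by simp [Fin.last]; omega)] at h
    simpa using h
  have hP : (r : ℝ) * x0 + ((s' : ℝ) + 1) * Q = L * P := by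
    have h := Finset.sum_congr rfl fun a (_ : a ∈ (Finset.univ : Finset (Fin (s' + 1)))) => e1 a
    rw [Finset.sum_add_distrib, sum_ite_fin (by omega), Finset.sum_const, ← Finset.mul_sum,
      Finset.card_univ, Fintype.card_fin, nsmul_eq_mul] at h
    rw [← hPdef] at h
    push_cast at h ⊢
    linarith [h]
  have hQe : (r : ℝ) * x0 + (t : ℝ) * P = L * Q := by
    have h := Finset.sum_congr rfl fun b (_ : b ∈ (Finset.univ : Finset (Fin t))) => e2 b
    rw [Finset.sum_add_distrib, sum_ite_fin hrt,
      Finset.sum_const, ← Finset.mul_sum, Finset.card_univ, Fintype.card_fin,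
      nsmul_eq_mul, ← hQdef] at h
    push_cast at h ⊢
    linarith [h]
  -- L > t via test vector
  have hT1 : (1 : ℝ) ≤ (t : ℝ) := by exact_mod_cast le_trans hr hrt
  have hNT : (t : ℝ) + 2 ≤ (s' : ℝ) + 1 := by exact_mod_cast hst
  have hLt : (t : ℝ) < L := by
    set y0 : Option (Fin (s' + 1) ⊕ Fin t) → ℝ :=
      fun u => Option.elim u 0 (Sum.elim (fun _ => (t : ℝ)) (fun _ => (s' : ℝ) + 1)) with hy0def
    have hray := rayleigh_le_sSup (Mstr (s' + 1) t r) (Mstr_isHermitian _ _ _) y0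
    rw [← hLdef] at hray
    have g0 : y0 none = 0 := rfl
    have g1 : ∀ a : Fin (s' + 1), y0 (some (Sum.inl a)) = (t : ℝ) := fun _ => rfl
    have g2 : ∀ b : Fin t, y0 (some (Sum.inr b)) = (s' : ℝ) + 1 := fun _ => rfl
    have hy0qf : (Mstr (s' + 1) t r *ᵥ y0) ⬝ᵥ y0
        = 2 * ((((s' : ℝ) + 1) * t) * ((t : ℝ) * ((s' : ℝ) + 1))) := by
      rw [Mstr_qf]
      simp only [g0, g1, g2, Finset.sum_const, Finset.card_univ, Fintype.card_fin,
        nsmul_eq_mul]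
      push_cast
      ring
    have hy0dot : y0 ⬝ᵥ y0 = ((s' : ℝ) + 1) * (t : ℝ) ^ 2 + (t : ℝ) * ((s' : ℝ) + 1) ^ 2 := by
      simp only [dotProduct, Fintype.sum_option, Fintype.sum_sum_type, g0, g1, g2,
        Finset.sum_const, Finset.card_univ, Fintype.card_fin, nsmul_eq_mul]
      push_cast
      ring
    rw [hy0qf, hy0dot] at hray
    have hDpos : (0 : ℝ) < ((s' : ℝ) + 1) * (t : ℝ) ^ 2 + (t : ℝ) * ((s' : ℝ) + 1) ^ 2 := by
      nlinarith [hT1, hNT]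
    have key : (t : ℝ) * (((s' : ℝ) + 1) * (t : ℝ) ^ 2 + (t : ℝ) * ((s' : ℝ) + 1) ^ 2)
        < 2 * ((((s' : ℝ) + 1) * t) * ((t : ℝ) * ((s' : ℝ) + 1))) := by
      nlinarith [hT1, hNT, mul_pos (mul_pos (show (0:ℝ) < (s':ℝ) + 1 by linarith)
        (show (0:ℝ) < (t:ℝ) by linarith)) (show (0:ℝ) < (t:ℝ) by linarith)]
    nlinarith [hray, key, hDpos]
  have hLpos : (0 : ℝ) < L := lt_of_le_of_lt (by linarith) hLt
  -- Q > 0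
  have hQpos : (0 : ℝ) < Q := by
    rcases eq_or_lt_of_le hQnn with hQ0 | h
    · exfalso
      have hrr : (1 : ℝ) ≤ (r : ℝ) := by exact_mod_cast hr
      have hx0z : x0 = 0 := by nlinarith [hQe, hPnn, hx0nn, hT1]
      have hPz : P = 0 := by nlinarith [hQe, hPnn, hx0nn, hT1]
      apply hx0
      funext u
      have hz : ∀ u, L * x u = 0 → x u = 0 := by
        intro u h
        rcases mul_eq_zero.mp h with h | h
        · exact absurd h (ne_of_gt hLpos)
        · exact h
      match u with
      | none => exact hx0z
      | some (Sum.inl a) =>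
          refine hz _ ?_
          rw [← e1 a, ← hQ0, hx0z]
          simp
      | some (Sum.inr b) =>
          refine hz _ ?_
          rw [← e2 b, hPz, hx0z]
          simp
    · exact h
  have hb0pos : (0 : ℝ) < b0 := by
    rcases eq_or_lt_of_le hb0nn with h0 | h
    · exfalso; rw [← h0, mul_zero] at hb; linarith
    · exact h
  -- key inequality
  have h2 : (L + t) * (P - Q) = (((s' : ℝ) + 1) - t) * Q := by linear_combination hQe - hP
  have h4 : L * ((L + t) * (P - Q)) = L * ((((s' : ℝ) + 1) - t) * Q) := by rw [h2]
  have h3 : Q < L * (P - Q) := by nlinarith [h4, hNT, hLt, hQpos, hLpos, mul_pos hLpos hQpos]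
  have hKey : b0 < P - Q := by nlinarith [h3, hb, hLpos]
  -- second graph, test vector y
  set y : Option (Fin s' ⊕ Fin (t + 1)) → ℝ := fun u =>
    match u with
    | none => x0
    | some (Sum.inl a) => x (some (Sum.inl a.castSucc))
    | some (Sum.inr b) => if h : b.val < t then x (some (Sum.inr ⟨b.val, h⟩)) else b0
    with hydef
  have hynone : y none = x0 := rfl
  have hyinl : ∀ a : Fin s', y (some (Sum.inl a)) = x (some (Sum.inl a.castSucc)) := fun a => rfl
  have hyinr : ∀ b : Fin (t + 1), y (some (Sum.inr b))
      = if h : b.val < t then x (some (Sum.inr ⟨b.val, h⟩)) else b0 := fun b => rfl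
  have cS1 : (∑ a : Fin s', if a.val < r then y (some (Sum.inl a)) else 0) = S1 := by
    rw [hS1def, Fin.sum_univ_castSucc]
    rw [if_neg (by simp [Fin.last]; omega)]
    simp only [hyinl, Fin.coe_castSucc, add_zero]
  have cS2 : (∑ b : Fin (t + 1), if b.val < r then y (some (Sum.inr b)) else 0) = S2 := by
    rw [Fin.sum_univ_castSucc]
    rw [if_neg (by simp [Fin.last]; omega)]
    rw [hS2def, add_zero]
    refine Finset.sum_congr rfl fun b _ => ?_
    rw [hyinr, Fin.coe_castSucc, dif_pos b.isLt]
  have cP : (∑ a : Fin s', y (some (Sum.inl a))) = P - b0 := by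
    rw [hPdef, Fin.sum_univ_castSucc, ← hb0def]
    simp only [hyinl]
    ring
  have cQ : (∑ b : Fin (t + 1), y (some (Sum.inr b))) = Q + b0 := by
    rw [Fin.sum_univ_castSucc, hQdef]
    congr 1
    · refine Finset.sum_congr rfl fun b _ => ?_
      rw [hyinr, dif_pos (by simpa using b.isLt)]
      congr 1
    · rw [hyinr, dif_neg (by simp [Fin.last])]
  have hray' := rayleigh_le_sSup (Mstr s' (t + 1) r) (Mstr_isHermitian _ _ _) y
  rw [← hL'def] at hray'
  have hyqf : (Mstr s' (t + 1) r *ᵥ y) ⬝ᵥ y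
      = 2 * x0 * (S1 + S2) + 2 * ((P - b0) * (Q + b0)) := by
    rw [Mstr_qf, cS1, cS2, cP, cQ, hynone]
  have hydot : y ⬝ᵥ y = x ⬝ᵥ x := by
    simp only [dotProduct]
    rw [Fintype.sum_option, Fintype.sum_sum_type, Fintype.sum_option, Fintype.sum_sum_type]
    rw [Fin.sum_univ_castSucc (f := fun a : Fin (s' + 1) =>
      x (some (Sum.inl a)) * x (some (Sum.inl a)))]
    rw [Fin.sum_univ_castSucc (f := fun b : Fin (t + 1) =>
      y (some (Sum.inr b)) * y (some (Sum.inr b)))]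
    have e3 : ∀ b : Fin t, y (some (Sum.inr b.castSucc)) = x (some (Sum.inr b)) := by
      intro b
      rw [hyinr, dif_pos (by simpa using b.isLt)]
      congr 1
    have e4 : y (some (Sum.inr (Fin.last t))) = b0 := by
      rw [hyinr, dif_neg (by simp [Fin.last])]
    simp only [hynone, hyinl, e3, e4, ← hb0def]
    ring
  have hqfx : 2 * x0 * (S1 + S2) + 2 * (P * Q) = L * (x ⬝ᵥ x) := by
    have h := Mstr_qf (s' + 1) t r x
    rw [hxe] at h
    rw [← hS1def, ← hS2def, ← hPdef, ← hQdef, ← hx0def] at h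
    rw [← h]
    simp [smul_dotProduct]
  have hxx : (0 : ℝ) < x ⬝ᵥ x := by
    have h1 : b0 * b0 ≤ x ⬝ᵥ x := by
      refine Finset.single_le_sum (f := fun u => x u * x u)
        (fun u _ => mul_self_nonneg _) (Finset.mem_univ (some (Sum.inl (Fin.last s'))))
    nlinarith [hb0pos]
  have hfin : L * (x ⬝ᵥ x) + 2 * b0 * (P - Q - b0) ≤ L' * (x ⬝ᵥ x) := by
    calc L * (x ⬝ᵥ x) + 2 * b0 * (P - Q - b0)
        = (Mstr s' (t + 1) r *ᵥ y) ⬝ᵥ y := by rw [hyqf, ← hqfx]; ring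
      _ ≤ L' * (y ⬝ᵥ y) := hray'
      _ = L' * (x ⬝ᵥ x) := by rw [hydot]
  have hdelta : (0 : ℝ) < 2 * b0 * (P - Q - b0) := by
    apply mul_pos (by linarith) (by linarith)
  have : L * (x ⬝ᵥ x) < L' * (x ⬝ᵥ x) := by linarith
  exact lt_of_mul_lt_mul_right this hxx.le
end
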